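/- arXiv:1808.00431 — 3 statements merged into one kernel-verified Lean document; each statement's English description precedes it below -/
import Mathlib

section
/- Euler's pentagonal number theorem: the infinite product ∏_{n≥1} (1 - X^n) equals the sum ∑_{n=-∞}^{∞} (-1)^n X^{(3n²+n)/2} as formal power series. -/
/-!
Mathlib's `PowerSeries.pentagonalSeries` is the infinite product `∏ (1 - X ^ (n + 1))`. Its
`N`-th coefficient is already that of the product over `n < N`, because the remaining factors are
`≡ 1 mod X ^ (N + 1)`. On the other side, `(3m² + m)/2` is `pentagonal (-m)`; as `pentagonal` is
injective with `|k| ≤ pentagonal k`, the sum over `[-N, N]` has at most one nonzero term, namely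
the coefficient of `X ^ N` in `pentagonalSeries`.
-/

open PowerSeries Finset

theorem dvd_prod_sub_one {ι R : Type*} [CommRing R] {a : R} {s : Finset ι} {f : ι → R}
    (h : ∀ i ∈ s, a ∣ f i - 1) : a ∣ ∏ i ∈ s, f i - 1 :=
  prod_induction f (a ∣ · - 1)
    (fun x y hx hy => by simpa [sub_mul, mul_sub] using dvd_add (hx.mul_right y) hy)
    (by simp) h

namespace PowerSeries

variable {R : Type*} [CommRing R]

theorem coeff_mul_of_X_pow_dvd_sub_one {n : ℕ} {f g : R⟦X⟧} (hg : X ^ (n + 1) ∣ g - 1) :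
    coeff n (f * g) = coeff n f := by
  have h : X ^ (n + 1) ∣ f * g - f := by simpa [mul_sub] using hg.mul_left f
  simpa [sub_eq_zero] using X_pow_dvd_iff.mp h n n.lt_succ_self

theorem coeff_prod_one_sub_X_pow_of_range_subset {n : ℕ} {s : Finset ℕ} (hs : range n ⊆ s) :
    coeff n (∏ i ∈ s, (1 - X ^ (i + 1) : R⟦X⟧)) =
      coeff n (∏ i ∈ range n, (1 - X ^ (i + 1) : R⟦X⟧)) := by
  rw [← prod_sdiff hs, mul_comm]
  refine coeff_mul_of_X_pow_dvd_sub_one (dvd_prod_sub_one fun i hi => ?_)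
  have hni : n ≤ i := by simpa using (mem_sdiff.mp hi).2
  simpa using (pow_dvd_pow X (by omega : n + 1 ≤ i + 1)).neg_right

theorem coeff_prod_range_one_sub_X_pow (n : ℕ) :
    coeff n (∏ i ∈ range n, (1 - X ^ (i + 1) : R⟦X⟧)) = coeff n (pentagonalSeries R) := by
  obtain ⟨s, hs⟩ := Filter.eventually_atTop.mp (coeff_prod_one_sub_X_pow_eventually_eq R n)
  rw [← hs (s ∪ range n) subset_union_left,
    coeff_prod_one_sub_X_pow_of_range_subset subset_union_right]

theorem coeff_prod_Icc_one_sub_X_pow (n : ℕ) :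
    coeff n (∏ i ∈ Icc 1 n, (1 - X ^ i : R⟦X⟧)) = coeff n (pentagonalSeries R) := by
  rw [← Ico_add_one_right_eq_Icc, ← coeff_prod_range_one_sub_X_pow, range_eq_Ico,
    prod_Ico_add' (fun i => (1 - X ^ i : R⟦X⟧))]

end PowerSeries

theorem natAbs_le_pentagonal (k : ℤ) : k.natAbs ≤ pentagonal k := by
  have := two_mul_natCast_pentagonal k
  zify
  rcases abs_cases k with ⟨hk, _⟩ | ⟨hk, _⟩ <;> rw [hk] <;> nlinarith

theorem natCast_pentagonal_neg (m : ℤ) : (pentagonal (-m) : ℤ) = (3 * m ^ 2 + m) / 2 := by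
  have h : 3 * m ^ 2 + m = 2 * pentagonal (-m) := by
    rw [two_mul_natCast_pentagonal_neg]; ring
  omega

theorem sum_Icc_ite_eq_coeff_pentagonalSeries (N : ℕ) :
    ∑ m ∈ Icc (-(N : ℤ)) N, (if (3 * m ^ 2 + m) / 2 = (N : ℤ) then (-1 : ℤ) ^ m.natAbs else 0) =
      coeff N (pentagonalSeries ℤ) := by
  simp_rw [← natCast_pentagonal_neg, Nat.cast_inj]
  by_cases hN : ∃ k, pentagonal k = N
  · obtain ⟨k, rfl⟩ := hN
    have hk := natAbs_le_pentagonal k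
    rw [coeff_pentagonalSeries_pentagonal, sum_eq_single (-k)]
    · simp [Int.coe_negOnePow]
    · intro m _ hm
      rw [if_neg (fun h => hm (neg_eq_iff_eq_neg.mp (pentagonal_injective h)))]
    · intro h
      exact absurd (mem_Icc.mpr ⟨by omega, by omega⟩) h
  · rw [coeff_pentagonalSeries_eq_zero ℤ hN]
    exact sum_eq_zero fun m _ => if_neg fun h => hN ⟨-m, h⟩

/-- Euler's pentagonal number theorem, stated coefficient-wise: the `N`-th coefficient of
`∏_{n=1}^{N} (1 - X^n)` (which agrees with that of the infinite product) equals
`∑_{m ∈ ℤ} (-1)^m [(3m²+m)/2 = N]`. -/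
theorem euler_pentagonal (N : ℕ) :
    (PowerSeries.coeff N) (∏ n ∈ Finset.Icc 1 N, (1 - PowerSeries.X ^ n)) =
      ∑ m ∈ Finset.Icc (-(N : ℤ)) (N : ℤ),
        if (3 * m ^ 2 + m) / 2 = (N : ℤ) then (-1 : ℤ) ^ m.natAbs else 0 := by
  rw [coeff_prod_Icc_one_sub_X_pow, sum_Icc_ite_eq_coeff_pentagonalSeries]
end

section
/- Jacobi's identity: the infinite product ∏_{n≥1} (1 - X^n)³ equals ∑_{n≥0} (-1)^n (2n+1) X^{n(n+1)/2} as formal power series. -/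
/-!
Write `q = X`, `(q; q)_n = ∏_{k=1}^{n} (1 - q^k)` (`qPochhammer`) and
`(y; q)_m = ∏_{j<m} (1 - q^j y)` (`qPochhammerPoly`, a polynomial in `y`).
The finite triple product `P(y) = ∏_{k=1}^{n+1} (1 - q^k y)(y - q^{k-1})` becomes
`±q^(n+1 choose 2) (y; q)_{2n+2}` under `y ↦ q^n y`, so by the q-binomial theorem
`[y^(n+1+j)] P = (-1)^j q^(j(j+1)/2) G` and `[y^(n-j)] P = -(-1)^j q^(j(j+1)/2) G`, where `G` is
the Gaussian binomial `(q; q)_{2n+2} / ((q; q)_i (q; q)_{2n+2-i})` at that index `i`.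
Since `(q; q)_{2n+2} G ≡ 1` modulo `q^(min i (2n+2-i) + 1)`, multiplying by `(q; q)_{2n+2}`
turns these coefficients into `±(-1)^j q^(j(j+1)/2)` modulo `q^(n+1)`.
On the other hand `P` has the factor `y - 1`, so `∑ i [y^i] P = P'(1) = (q; q)_{n+1} (q; q)_n`,
and `(q; q)_{2n+2} (q; q)_{n+1} (q; q)_n ≡ (q; q)_n³`. Pairing the indices `n - j` and
`n + 1 + j` leaves `(2j + 1)(-1)^j q^(j(j+1)/2)`.
-/

open PowerSeries Finset

lemma Finset.sum_range_two_mul_add_three {M : Type*} [AddCommMonoid M] (f : ℕ → M) (n : ℕ) :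
    ∑ i ∈ range (2 * n + 3), f i =
      ∑ j ∈ range (n + 1), (f (n - j) + f (n + 1 + j)) + f (2 * n + 2) := by
  rw [show 2 * n + 3 = (n + 1) + (n + 1) + 1 by ring, sum_range_succ, sum_range_add,
    ← sum_range_reflect _ (n + 1), ← sum_add_distrib]
  simp only [Nat.add_sub_cancel, show n + 1 + (n + 1) = 2 * n + 2 by ring]

lemma Nat.le_choose_two_succ (j : ℕ) : j ≤ (j + 1).choose 2 := by
  rw [Nat.choose_succ_succ', Nat.choose_one_right]
  omega

lemma Polynomial.derivative_eval_one_eq_sum {S : Type*} [CommSemiring S] {p : Polynomial S}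
    {m : ℕ} (hp : p.natDegree < m) : p.derivative.eval 1 = ∑ i ∈ range m, p.coeff i * i := by
  rw [Polynomial.derivative_eval, Polynomial.sum_over_range' _ (by simp) m hp]
  simp

namespace Jacobi

variable (R : Type*) [CommRing R]

local notation "Y" => (Polynomial.X : Polynomial R⟦X⟧)

noncomputable section

def qPochhammer (n : ℕ) : R⟦X⟧ := ∏ k ∈ range n, (1 - X ^ (k + 1))

def qPochhammerPoly (m : ℕ) : Polynomial R⟦X⟧ :=
  ∏ j ∈ range m, (1 - Polynomial.C (X ^ j) * Y)

def finiteTripleProduct (n : ℕ) : Polynomial R⟦X⟧ :=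
  ∏ k ∈ range n, (1 - Polynomial.C (X ^ (k + 1)) * Y) * (Y - Polynomial.C (X ^ k))

end

variable {R}

lemma qPochhammer_succ (n : ℕ) :
    qPochhammer R (n + 1) = qPochhammer R n * (1 - X ^ (n + 1)) :=
  prod_range_succ _ _

lemma isUnit_qPochhammer (n : ℕ) : IsUnit (qPochhammer R n) := by
  simp [isUnit_iff_constantCoeff, qPochhammer]

lemma X_pow_succ_dvd_qPochhammer_sub {n m : ℕ} (h : n ≤ m) :
    (X : R⟦X⟧) ^ (n + 1) ∣ qPochhammer R m - qPochhammer R n := by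
  induction m, h using Nat.le_induction with
  | base => simp
  | succ m _ ih =>
    rw [qPochhammer_succ, show qPochhammer R m * (1 - X ^ (m + 1)) - qPochhammer R n
      = (qPochhammer R m - qPochhammer R n) - X ^ (m + 1) * qPochhammer R m by ring]
    exact ih.sub ((pow_dvd_pow X (by omega)).mul_right _)

-- `(X;X)_m² / ((X;X)_a (X;X)_b) ≡ 1` modulo `X^(min a b + 1)`.
lemma X_pow_dvd_qPochhammer_mul_sub {a b m t M : ℕ} {c s : R⟦X⟧}
    (h : qPochhammer R a * qPochhammer R b * c = s * X ^ t * qPochhammer R m)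
    (ham : a ≤ m) (hbm : b ≤ m) (ha : M ≤ t + a + 1) (hb : M ≤ t + b + 1) :
    X ^ M ∣ qPochhammer R m * c - s * X ^ t := by
  have hw : IsUnit (qPochhammer R a * qPochhammer R b) :=
    (isUnit_qPochhammer a).mul (isUnit_qPochhammer b)
  rw [← hw.dvd_mul_left]
  have key : qPochhammer R a * qPochhammer R b * (qPochhammer R m * c - s * X ^ t) =
      s * (X ^ t * (qPochhammer R m - qPochhammer R b)) * qPochhammer R m
        + s * (X ^ t * (qPochhammer R m - qPochhammer R a)) * qPochhammer R b := by
    linear_combination qPochhammer R m * h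
  rw [key]
  refine dvd_add (dvd_mul_of_dvd_left (dvd_mul_of_dvd_right ?_ _) _)
    (dvd_mul_of_dvd_left (dvd_mul_of_dvd_right ?_ _) _)
  · exact (pow_dvd_pow X (by omega)).trans
      (pow_add (X : R⟦X⟧) t (b + 1) ▸ mul_dvd_mul_left _ (X_pow_succ_dvd_qPochhammer_sub hbm))
  · exact (pow_dvd_pow X (by omega)).trans
      (pow_add (X : R⟦X⟧) t (a + 1) ▸ mul_dvd_mul_left _ (X_pow_succ_dvd_qPochhammer_sub ham))

lemma coeff_qPochhammerPoly_succ_succ (m i : ℕ) :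
    (qPochhammerPoly R (m + 1)).coeff (i + 1) =
      (qPochhammerPoly R m).coeff (i + 1) - X ^ m * (qPochhammerPoly R m).coeff i := by
  rw [qPochhammerPoly, prod_range_succ, ← qPochhammerPoly, mul_sub, mul_one,
    Polynomial.coeff_sub, mul_left_comm, Polynomial.coeff_C_mul, Polynomial.coeff_mul_X]

lemma coeff_zero_qPochhammerPoly (m : ℕ) : (qPochhammerPoly R m).coeff 0 = 1 := by
  simp [qPochhammerPoly, Polynomial.coeff_zero_eq_eval_zero, Polynomial.eval_prod]

lemma coeff_qPochhammerPoly_of_lt {m i : ℕ} (h : m < i) : (qPochhammerPoly R m).coeff i = 0 := by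
  induction m generalizing i with
  | zero => simp [qPochhammerPoly, Polynomial.coeff_one, h.ne']
  | succ m ih =>
    obtain ⟨i, rfl⟩ : ∃ i', i = i' + 1 := ⟨i - 1, by omega⟩
    rw [coeff_qPochhammerPoly_succ_succ, ih (by omega), ih (by omega), mul_zero, sub_zero]

lemma qPochhammerPoly_add (m l : ℕ) :
    qPochhammerPoly R (m + l) =
      qPochhammerPoly R m * ∏ k ∈ range l, (1 - Polynomial.C (X ^ (m + k)) * Y) :=
  prod_range_add _ _ _

/-- The q-binomial theorem, with the denominators of the Gaussian binomial cleared. -/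
theorem qPochhammer_mul_coeff_qPochhammerPoly (i j : ℕ) :
    qPochhammer R i * qPochhammer R j * (qPochhammerPoly R (i + j)).coeff i =
      (-1) ^ i * X ^ i.choose 2 * qPochhammer R (i + j) := by
  induction i generalizing j with
  | zero => simp [qPochhammer, coeff_zero_qPochhammerPoly]
  | succ i ih =>
    induction j with
    | zero =>
      have h := ih 0
      rw [add_zero] at h
      rw [add_zero, coeff_qPochhammerPoly_succ_succ, coeff_qPochhammerPoly_of_lt (by omega),
        qPochhammer_succ, Nat.choose_succ_succ', Nat.choose_one_right]
      linear_combination (-(X : R⟦X⟧) ^ i * (1 - X ^ (i + 1))) * h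
    | succ j ihj =>
      have h := ih (j + 1)
      rw [qPochhammer_succ j] at h
      rw [show i + 1 + j = i + (j + 1) by omega, qPochhammer_succ i, Nat.choose_succ_succ',
        Nat.choose_one_right] at ihj
      rw [show i + 1 + (j + 1) = i + (j + 1) + 1 by omega, coeff_qPochhammerPoly_succ_succ,
        qPochhammer_succ j, qPochhammer_succ i, qPochhammer_succ (i + (j + 1)),
        Nat.choose_succ_succ', Nat.choose_one_right]
      linear_combination (1 - (X : R⟦X⟧) ^ (j + 1)) * ihj
        - X ^ (i + (j + 1)) * (1 - X ^ (i + 1)) * h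

lemma prod_neg_X_pow (n : ℕ) :
    ∏ k ∈ range n, (-(X : R⟦X⟧) ^ k) = (-1) ^ n * X ^ n.choose 2 := by
  rw [prod_congr rfl fun k _ => neg_eq_neg_one_mul ((X : R⟦X⟧) ^ k), prod_mul_distrib,
    prod_const, card_range, prod_pow_eq_pow_sum, sum_range_id, Nat.choose_two_right]

lemma finiteTripleProduct_comp (n : ℕ) :
    (finiteTripleProduct R (n + 1)).comp (Polynomial.C (X ^ n) * Y) =
      Polynomial.C ((-1) ^ (n + 1) * X ^ (n + 1).choose 2) * qPochhammerPoly R (2 * n + 2) := by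
  have factor : ∀ k ∈ range (n + 1),
      ((1 - Polynomial.C (X ^ (k + 1)) * Y) * (Y - Polynomial.C (X ^ k))).comp
          (Polynomial.C (X ^ n) * Y) =
        (1 - Polynomial.C (X ^ (n + 1 + k)) * Y) *
          (Polynomial.C (-X ^ k) * (1 - Polynomial.C (X ^ (n - k)) * Y)) := by
    intro k hk
    have hn : (X : R⟦X⟧) ^ n = X ^ k * X ^ (n - k) := by
      rw [← pow_add, Nat.add_sub_cancel' (by simpa [Nat.lt_succ_iff] using hk)]
    simp only [Polynomial.mul_comp, Polynomial.sub_comp, Polynomial.one_comp, Polynomial.C_comp,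
      Polynomial.X_comp, map_neg, map_mul, hn, pow_add, pow_one]
    ring
  have reflect : ∏ k ∈ range (n + 1), (1 - Polynomial.C (X ^ (n - k)) * Y) =
      qPochhammerPoly R (n + 1) := by
    have h := prod_range_reflect (fun k => 1 - Polynomial.C ((X : R⟦X⟧) ^ k) * Y) (n + 1)
    rwa [Nat.add_sub_cancel] at h
  rw [finiteTripleProduct, Polynomial.prod_comp, prod_congr rfl factor, prod_mul_distrib,
    prod_mul_distrib, ← map_prod, prod_neg_X_pow, reflect,
    show 2 * n + 2 = (n + 1) + (n + 1) by ring, qPochhammerPoly_add (n + 1) (n + 1)]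
  ring

lemma qPochhammer_mul_coeff_finiteTripleProduct {n i k : ℕ} (h : i + k = 2 * n + 2) :
    qPochhammer R i * qPochhammer R k * (finiteTripleProduct R (n + 1)).coeff i * X ^ (n * i) =
      (-1) ^ (n + 1 + i) * X ^ ((n + 1).choose 2 + i.choose 2) * qPochhammer R (2 * n + 2) := by
  have hcomp := congrArg (Polynomial.coeff · i) (finiteTripleProduct_comp (R := R) n)
  simp only [Polynomial.comp_C_mul_X_coeff, Polynomial.coeff_C_mul, ← pow_mul, ← h] at hcomp
  rw [← h]
  linear_combination qPochhammer R i * qPochhammer R k * hcomp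
    + (-1) ^ (n + 1) * X ^ (n + 1).choose 2 * qPochhammer_mul_coeff_qPochhammerPoly (R := R) i k

lemma qPochhammer_mul_coeff_finiteTripleProduct_upper {n j l : ℕ} (h : j + l = n + 1) :
    qPochhammer R (n + 1 + j) * qPochhammer R l *
        (finiteTripleProduct R (n + 1)).coeff (n + 1 + j) =
      (-1) ^ j * X ^ (j + 1).choose 2 * qPochhammer R (2 * n + 2) := by
  have hexp : (n + 1).choose 2 + (n + 1 + j).choose 2 = n * (n + 1 + j) + (j + 1).choose 2 := by
    qify [Nat.cast_choose_two]
    ring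
  have hsign : (-1 : R⟦X⟧) ^ (n + 1 + (n + 1 + j)) = (-1) ^ j := by
    rw [show n + 1 + (n + 1 + j) = 2 * (n + 1) + j by ring, pow_add, pow_mul]
    simp
  have hc := qPochhammer_mul_coeff_finiteTripleProduct (R := R) (n := n) (i := n + 1 + j)
    (k := l) (by omega)
  rw [hexp, hsign, pow_add] at hc
  apply X_pow_mul_cancel (k := n * (n + 1 + j))
  linear_combination hc

lemma qPochhammer_mul_coeff_finiteTripleProduct_lower {n i j : ℕ} (h : i + j = n) :
    qPochhammer R i * qPochhammer R (n + 2 + j) * (finiteTripleProduct R (n + 1)).coeff i =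
      -(-1) ^ j * X ^ (j + 1).choose 2 * qPochhammer R (2 * n + 2) := by
  subst h
  have hexp : (i + j + 1).choose 2 + i.choose 2 = (i + j) * i + (j + 1).choose 2 := by
    qify [Nat.cast_choose_two]
    ring
  have hsign : (-1 : R⟦X⟧) ^ (i + j + 1 + i) = -(-1) ^ j := by
    rw [show i + j + 1 + i = 2 * i + j + 1 by ring, pow_succ, pow_add, pow_mul]
    simp
  have hc := qPochhammer_mul_coeff_finiteTripleProduct (R := R) (n := i + j) (i := i)
    (k := i + j + 2 + j) (by omega)
  rw [hexp, hsign, pow_add] at hc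
  apply X_pow_mul_cancel (k := (i + j) * i)
  linear_combination hc

lemma X_pow_dvd_qPochhammer_mul_coeff_finiteTripleProduct_upper_sub {n j : ℕ}
    (hj : j ≤ n + 1) :
    (X : R⟦X⟧) ^ (n + 1) ∣ qPochhammer R (2 * n + 2) *
        (finiteTripleProduct R (n + 1)).coeff (n + 1 + j) - (-1) ^ j * X ^ (j + 1).choose 2 := by
  have := Nat.le_choose_two_succ j
  exact X_pow_dvd_qPochhammer_mul_sub
    (qPochhammer_mul_coeff_finiteTripleProduct_upper (l := n + 1 - j) (by omega))
    (by omega) (by omega) (by omega) (by omega)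

lemma X_pow_dvd_qPochhammer_mul_coeff_finiteTripleProduct_lower_sub {n j : ℕ} (hj : j ≤ n) :
    (X : R⟦X⟧) ^ (n + 1) ∣ qPochhammer R (2 * n + 2) *
        (finiteTripleProduct R (n + 1)).coeff (n - j) - -(-1) ^ j * X ^ (j + 1).choose 2 := by
  have := Nat.le_choose_two_succ j
  exact X_pow_dvd_qPochhammer_mul_sub
    (qPochhammer_mul_coeff_finiteTripleProduct_lower (i := n - j) (by omega))
    (by omega) (by omega) (by omega) (by omega)

lemma natDegree_finiteTripleProduct_le (n : ℕ) :
    (finiteTripleProduct R n).natDegree ≤ 2 * n := by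
  refine (Polynomial.natDegree_prod_le _ _).trans
    ((sum_le_sum fun k _ => (?_ : _ ≤ 2)).trans (by simp [mul_comm]))
  compute_degree

-- The factor `k = 0` is `(1 - X Y)(Y - 1)`, so only its derivative survives at `Y = 1`.
lemma derivative_finiteTripleProduct_eval_one (n : ℕ) :
    (finiteTripleProduct R (n + 1)).derivative.eval 1 =
      qPochhammer R (n + 1) * qPochhammer R n := by
  rw [finiteTripleProduct, prod_range_succ', qPochhammer, prod_range_succ', qPochhammer]
  simp [Polynomial.derivative_mul, Polynomial.eval_prod, prod_mul_distrib]
  ring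

lemma qPochhammer_succ_mul_qPochhammer_eq_sum (n : ℕ) :
    qPochhammer R (n + 1) * qPochhammer R n =
      ∑ i ∈ range (2 * n + 3), (finiteTripleProduct R (n + 1)).coeff i * i := by
  rw [← derivative_finiteTripleProduct_eval_one, Polynomial.derivative_eval_one_eq_sum]
  have := natDegree_finiteTripleProduct_le (R := R) (n + 1)
  omega

theorem X_pow_dvd_qPochhammer_cube_sub (n : ℕ) :
    (X : R⟦X⟧) ^ (n + 1) ∣ qPochhammer R n ^ 3 -
      ∑ j ∈ range (n + 1),
        PowerSeries.C ((-1) ^ j * (2 * j + 1) : R) * X ^ (j + 1).choose 2 := by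
  let π := Ideal.Quotient.mk (Ideal.span {(X : R⟦X⟧) ^ (n + 1)})
  have hπ {f g : R⟦X⟧} (h : X ^ (n + 1) ∣ f - g) : π f = π g :=
    Ideal.Quotient.eq.2 (Ideal.mem_span_singleton.2 h)
  let c i := π (qPochhammer R (2 * n + 2) * (finiteTripleProduct R (n + 1)).coeff i)
  have hE {m : ℕ} (h : n ≤ m) : π (qPochhammer R m) = π (qPochhammer R n) :=
    hπ (X_pow_succ_dvd_qPochhammer_sub h)
  have hlast : c (2 * n + 2) = 0 := by
    dsimp only [c]
    have h := hπ (X_pow_dvd_qPochhammer_mul_coeff_finiteTripleProduct_upper_sub (le_refl (n + 1)))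
    rw [show n + 1 + (n + 1) = 2 * n + 2 by ring] at h
    rw [h, map_mul]
    exact mul_eq_zero_of_right _ (Ideal.Quotient.eq_zero_iff_mem.2
      (Ideal.mem_span_singleton.2 (pow_dvd_pow X (Nat.le_choose_two_succ (n + 1)))))
  rw [← Ideal.mem_span_singleton, ← Ideal.Quotient.eq]
  calc π (qPochhammer R n ^ 3)
      = π (qPochhammer R (2 * n + 2) * (qPochhammer R (n + 1) * qPochhammer R n)) := by
        rw [map_pow, map_mul, map_mul, hE (m := 2 * n + 2) (by omega),
          hE (m := n + 1) (by omega)]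
        ring
    _ = ∑ i ∈ range (2 * n + 3), c i * i := by
        rw [qPochhammer_succ_mul_qPochhammer_eq_sum, mul_sum, map_sum]
        simp only [c, map_mul, map_natCast, mul_assoc]
    _ = _ := by
        rw [sum_range_two_mul_add_three, hlast, zero_mul, add_zero, map_sum]
        refine sum_congr rfl fun j hj => ?_
        have hj : j ≤ n := Nat.lt_succ_iff.1 (mem_range.1 hj)
        dsimp only [c]
        rw [hπ (X_pow_dvd_qPochhammer_mul_coeff_finiteTripleProduct_lower_sub hj),
          hπ (X_pow_dvd_qPochhammer_mul_coeff_finiteTripleProduct_upper_sub (by omega)),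
          Nat.cast_sub hj]
        simp only [map_mul, map_add, map_pow, map_neg, map_one, map_natCast, map_ofNat]
        push_cast
        ring

end Jacobi

/-- Jacobi's identity, stated coefficient-wise: the `N`-th coefficient of
`∏_{n=1}^{N} (1 - X^n)³` equals `∑_{m ≥ 0} (-1)^m (2m+1) [m(m+1)/2 = N]`. -/
theorem jacobi_identity (N : ℕ) :
    (PowerSeries.coeff (R := ℤ) N) (∏ n ∈ Finset.Icc 1 N, (1 - PowerSeries.X ^ n) ^ 3) =
      ∑ m ∈ Finset.range (N + 1),
        if m * (m + 1) / 2 = N then (-1 : ℤ) ^ m * (2 * m + 1) else 0 := by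
  have hprod : ∏ n ∈ Icc 1 N, (1 - X ^ n) ^ 3 = Jacobi.qPochhammer ℤ N ^ 3 := by
    rw [prod_pow, Jacobi.qPochhammer, range_eq_Ico,
      prod_Ico_add' (fun k => 1 - (X : ℤ⟦X⟧) ^ k), Ico_add_one_right_eq_Icc]
  have hcoeff :=
    X_pow_dvd_iff.1 (Jacobi.X_pow_dvd_qPochhammer_cube_sub (R := ℤ) N) N N.lt_succ_self
  rw [map_sub, sub_eq_zero] at hcoeff
  rw [hprod, hcoeff, map_sum]
  refine sum_congr rfl fun m _ => ?_
  rw [coeff_C_mul_X_pow, Nat.choose_two_right, Nat.add_sub_cancel, mul_comm (m + 1)]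
  exact if_congr eq_comm rfl rfl
end

section
/- Let a₃(n) be the coefficients defined by ∏_{n≥1}(1 - X^n)³ = ∑_{n≥0} a₃(n) X^n. Then a₃(n) = 0 if and only if n is not a triangular number, i.e. n ≠ m(m+1)/2 for all integers m ≥ 0. -/
/-!
Jacobi's identity is the `z`-derivative at `z = 1` of the finite triple product
`∏_{j<N} (1 - q^{j+1} z)(z - q^j) = ∑_i (-1)^{i-N} q^{T(i-N)} [2N, i]_q z^i`
(`T` the triangular number), which follows from the two q-Pascal rules. The factor `z - 1`
(from `j = 0`) vanishes at `z = 1`, so the derivative there gives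
`(q;q)_N (q;q)_{N-1} = ∑_i (-1)^{i-N} i q^{T(i-N)} [2N, i]_q`.
Multiply by `(q;q)_N` and take `N = n + 1`: the left side agrees with `(q;q)_n^3` up to `q^n`,
and on the right `(q;q)_N [2N, i]_q ≡ 1` modulo a power of `q` so high that only the indices
with `T(i-N) = n` reach the coefficient of `q^n`. These are `i - N = m` and `i - N = -m-1` with
`T(m) = n`, and together they contribute `(-1)^m (2m+1) ≠ 0`.
-/

/-- The `n`-th Fourier coefficient of `∏ (1 - X^k)³`. -/
noncomputable def a3 (n : ℕ) : ℤ :=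
  (PowerSeries.coeff (R := ℤ) n) (∏ k ∈ Finset.Icc 1 n, (1 - PowerSeries.X ^ k) ^ 3)

open Polynomial Finset

def triangular (k : ℤ) : ℕ := (k * (k + 1) / 2).toNat

theorem two_mul_natCast_triangular (k : ℤ) : 2 * (triangular k : ℤ) = k * (k + 1) := by
  have hdvd : 2 ∣ k * (k + 1) := (Int.even_mul_succ_self k).two_dvd
  have hnonneg : 0 ≤ k * (k + 1) := by nlinarith [sq_nonneg (2 * k + 1)]
  rw [triangular, Int.toNat_of_nonneg (Int.ediv_nonneg hnonneg (by norm_num)),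
    Int.mul_ediv_cancel' hdvd]

theorem natCast_triangular_add_one (k : ℤ) :
    (triangular (k + 1) : ℤ) = triangular k + (k + 1) := by
  linarith [two_mul_natCast_triangular k, two_mul_natCast_triangular (k + 1)]

theorem abs_sub_one_le_triangular (k : ℤ) : |k| - 1 ≤ triangular k := by
  have h := two_mul_natCast_triangular k
  rw [sub_le_iff_le_add, abs_le]
  constructor <;> nlinarith [sq_nonneg (2 * k - 1), sq_nonneg (2 * k + 3), sq_nonneg (2 * k + 1)]

theorem triangular_natCast (m : ℕ) : triangular m = m * (m + 1) / 2 := by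
  have h := two_mul_natCast_triangular m
  rw [eq_comm, Nat.div_eq_iff_eq_mul_left two_pos (Nat.even_mul_succ_self m).two_dvd]
  exact_mod_cast (show (m : ℤ) * (m + 1) = triangular m * 2 by linarith)

theorem triangular_neg_sub_one (k : ℤ) : triangular (-k - 1) = triangular k := by
  have h := two_mul_natCast_triangular k
  have h' := two_mul_natCast_triangular (-k - 1)
  exact_mod_cast (by linarith : (triangular (-k - 1) : ℤ) = triangular k)

theorem triangular_eq_triangular_iff {k l : ℤ} :
    triangular k = triangular l ↔ k = l ∨ k = -l - 1 := by
  have hk := two_mul_natCast_triangular k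
  have hl := two_mul_natCast_triangular l
  constructor
  · intro h
    have hfactor : (k - l) * (k + l + 1) = 0 := by rw [h] at hk; linear_combination hl - hk
    rcases mul_eq_zero.1 hfactor with h0 | h0
    · exact Or.inl (by linarith)
    · exact Or.inr (by linarith)
  · rintro (rfl | rfl)
    · rfl
    · exact triangular_neg_sub_one l

theorem exists_natCast_triangular_eq (k : ℤ) : ∃ m : ℕ, triangular m = triangular k := by
  rcases le_or_gt 0 k with hk | hk
  · exact ⟨k.toNat, by rw [Int.toNat_of_nonneg hk]⟩
  · exact ⟨(-k - 1).toNat, by rw [Int.toNat_of_nonneg (by omega), triangular_neg_sub_one]⟩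

variable {R : Type*} [CommRing R]

variable (R) in
/-- The Gaussian binomial coefficient `[M, r]_q`, extended by zero to `r ∉ [0, M]` so that both
q-Pascal rules hold for every `r : ℤ`. -/
noncomputable def qBinomial : ℕ → ℤ → R[X]
  | 0, r => if r = 0 then 1 else 0
  | M + 1, r => qBinomial M r + X ^ (M + 1 - r).toNat * qBinomial M (r - 1)

variable (R) in
/-- `qProd R 0 m` is the q-Pochhammer symbol `(q;q)_m`. -/
noncomputable def qProd (a b : ℕ) : R[X] := ∏ j ∈ Ioc a b, (1 - X ^ j)

theorem qBinomial_succ (M : ℕ) (r : ℤ) :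
    qBinomial R (M + 1) r = qBinomial R M r + X ^ (M + 1 - r).toNat * qBinomial R M (r - 1) :=
  rfl

theorem qBinomial_of_neg (M : ℕ) {r : ℤ} (hr : r < 0) : qBinomial R M r = 0 := by
  induction M generalizing r with
  | zero => simp [qBinomial, hr.ne]
  | succ M ih => simp [qBinomial_succ, ih hr, ih (show r - 1 < 0 by omega)]

theorem qBinomial_of_lt {M : ℕ} {r : ℤ} (hr : M < r) : qBinomial R M r = 0 := by
  induction M generalizing r with
  | zero => simp [qBinomial, show r ≠ 0 by omega]
  | succ M ih =>
    simp [qBinomial_succ, ih (show (M : ℤ) < r by omega), ih (show (M : ℤ) < r - 1 by omega)]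

@[simp]
theorem qBinomial_zero_right (M : ℕ) : qBinomial R M 0 = 1 := by
  induction M with
  | zero => simp [qBinomial]
  | succ M ih => simp [qBinomial_succ, ih, qBinomial_of_neg M (show (-1 : ℤ) < 0 by omega)]

@[simp]
theorem qBinomial_self (M : ℕ) : qBinomial R M M = 1 := by
  induction M with
  | zero => simp [qBinomial]
  | succ M ih => simpa [qBinomial_succ, qBinomial_of_lt (show (M : ℤ) < M + 1 by omega)] using ih

theorem qBinomial_succ' (M : ℕ) (r : ℤ) :
    qBinomial R (M + 1) r = X ^ r.toNat * qBinomial R M r + qBinomial R M (r - 1) := by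
  induction M generalizing r with
  | zero =>
    rcases eq_or_ne r 0 with rfl | h0
    · simp [qBinomial]
    rcases eq_or_ne r 1 with rfl | h1
    · simp [qBinomial]
    · simp [qBinomial, h0, h1, sub_eq_zero]
  | succ M ih =>
    rw [qBinomial_succ (M + 1) r]
    conv_lhs => rw [ih r, ih (r - 1)]
    conv_rhs => rw [qBinomial_succ M r, qBinomial_succ M (r - 1)]
    rw [show (↑M + 1 - (r - 1)).toNat = (↑(M + 1) + 1 - r).toNat by omega]
    rcases le_or_gt r 0 with h | h
    · rw [qBinomial_of_neg M (show r - 1 < 0 by omega)]; ring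
    rcases le_or_gt r (M + 1) with h' | h'
    · have hX : (X : R[X]) ^ (↑(M + 1) + 1 - r).toNat * X ^ (r - 1).toNat
          = X ^ r.toNat * X ^ (↑M + 1 - r).toNat := by
        rw [← pow_add, ← pow_add]; congr 1; omega
      linear_combination hX * qBinomial R M (r - 1)
    · rw [qBinomial_of_lt (show (M : ℤ) < r - 1 by omega)]
      ring

theorem X_pow_mul_qBinomial_congr {M : ℕ} {r : ℤ} {a b : ℕ}
    (h : 0 ≤ r → r ≤ M → a = b) :
    X ^ a * qBinomial R M r = X ^ b * qBinomial R M r := by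
  rcases lt_or_ge r 0 with h0 | h0
  · simp [qBinomial_of_neg M h0]
  rcases lt_or_ge (M : ℤ) r with hM | hM
  · simp [qBinomial_of_lt hM]
  rw [h h0 hM]

theorem qProd_of_le {a b : ℕ} (h : b ≤ a) : qProd R a b = 1 := by
  simp [qProd, Ioc_eq_empty_of_le h]

theorem qProd_succ {a b : ℕ} (h : a ≤ b) :
    qProd R a (b + 1) = qProd R a b * (1 - X ^ (b + 1)) :=
  prod_Ioc_succ_top h _

theorem qProd_mul_qProd {a b c : ℕ} (hab : a ≤ b) (hbc : b ≤ c) :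
    qProd R a b * qProd R b c = qProd R a c :=
  prod_Ioc_consecutive _ hab hbc

theorem qProd_eq_one_sub_mul {a b : ℕ} (h : a < b) :
    qProd R a b = (1 - X ^ (a + 1)) * qProd R (a + 1) b := by
  rw [← qProd_mul_qProd (Nat.le_succ a) h, qProd_succ le_rfl, qProd_of_le le_rfl, one_mul]

theorem qProd_zero_left (n : ℕ) : qProd R 0 n = ∏ j ∈ range n, (1 - X ^ (j + 1)) := by
  induction n with
  | zero => simp [qProd_of_le]
  | succ n ih => rw [qProd_succ (Nat.zero_le n), ih, prod_range_succ]

theorem dvd_mul_sub_one {a f g : R} (hf : a ∣ f - 1) (hg : a ∣ g - 1) : a ∣ f * g - 1 := by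
  have h := dvd_add (dvd_mul_of_dvd_left hf g) hg
  rwa [show (f - 1) * g + (g - 1) = f * g - 1 by ring] at h

theorem X_pow_dvd_qProd_sub_one {m a : ℕ} (h : m ≤ a + 1) (b : ℕ) :
    X ^ m ∣ qProd R a b - 1 := by
  induction b with
  | zero => simp [qProd_of_le]
  | succ b ih =>
    rcases le_or_gt (b + 1) a with hb | hb
    · simp [qProd_of_le hb]
    rw [qProd_succ (by omega)]
    refine dvd_mul_sub_one ih ?_
    rw [sub_sub_cancel_left]
    exact (pow_dvd_pow X (by omega)).neg_right

theorem qBinomial_mul_qProd_zero_left {M r : ℕ} (h : r ≤ M) :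
    qBinomial R M r * qProd R 0 r = qProd R (M - r) M := by
  induction M generalizing r with
  | zero =>
    obtain rfl : r = 0 := by omega
    simp [qProd_of_le]
  | succ M ih =>
    rcases Nat.eq_zero_or_pos r with rfl | hr0
    · simp [qProd_of_le]
    rcases h.eq_or_lt with rfl | hrM
    · rw [qBinomial_self, one_mul, Nat.sub_self]
    obtain ⟨s, rfl⟩ : ∃ s, r = s + 1 := ⟨r - 1, by omega⟩
    rw [qBinomial_succ, show ((s + 1 : ℕ) : ℤ) - 1 = s by push_cast; ring,
      show ((M : ℤ) + 1 - ((s + 1 : ℕ) : ℤ)).toNat = M - s by omega]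
    have h1 := ih (show s + 1 ≤ M by omega)
    rw [show M - (s + 1) = M - s - 1 by omega, qProd_eq_one_sub_mul (show M - s - 1 < M by omega),
      show M - s - 1 + 1 = M - s by omega] at h1
    have h2 : qBinomial R M s * qProd R 0 (s + 1) = qProd R (M - s) M * (1 - X ^ (s + 1)) := by
      rw [qProd_succ (Nat.zero_le s), ← mul_assoc, ih (show s ≤ M by omega)]
    have hX : (X : R[X]) ^ (M - s) * X ^ (s + 1) = X ^ (M + 1) := by
      rw [← pow_add]; congr 1; omega
    rw [show M + 1 - (s + 1) = M - s by omega, qProd_succ (show M - s ≤ M by omega)]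
    linear_combination h1 + X ^ (M - s) * h2 - qProd R (M - s) M * hX

theorem qBinomial_mul_qProd_zero_sub {M r : ℕ} (h : r ≤ M) :
    qBinomial R M r * qProd R 0 (M - r) = qProd R r M := by
  induction M generalizing r with
  | zero =>
    obtain rfl : r = 0 := by omega
    simp [qProd_of_le]
  | succ M ih =>
    rcases Nat.eq_zero_or_pos r with rfl | hr0
    · simp
    rcases h.eq_or_lt with rfl | hrM
    · rw [qBinomial_self, Nat.sub_self, qProd_of_le le_rfl, qProd_of_le le_rfl, one_mul]
    rw [qBinomial_succ', Int.toNat_natCast, show (r : ℤ) - 1 = ((r - 1 : ℕ) : ℤ) by omega]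
    have h1 := ih (show r ≤ M by omega)
    have h2 := ih (show r - 1 ≤ M by omega)
    rw [show M - (r - 1) = M - r + 1 by omega, qProd_succ (Nat.zero_le _),
      qProd_eq_one_sub_mul (show r - 1 < M by omega), show r - 1 + 1 = r by omega] at h2
    have hX : (X : R[X]) ^ r * X ^ (M - r + 1) = X ^ (M + 1) := by
      rw [← pow_add]; congr 1; omega
    rw [show M + 1 - r = M - r + 1 by omega, qProd_succ (Nat.zero_le _), qProd_succ (by omega)]
    linear_combination (X ^ r * (1 - X ^ (M - r + 1))) * h1 + h2 - qProd R r M * hX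

theorem X_pow_dvd_qProd_mul_qBinomial_sub_one {N i : ℕ} (hi : i ≤ 2 * N) :
    X ^ (min i (2 * N - i) + 1) ∣ qProd R 0 N * qBinomial R (2 * N) i - 1 := by
  rcases le_total i N with h | h
  · have hsplit : qProd R 0 N * qBinomial R (2 * N) i
        = qProd R i N * qProd R (2 * N - i) (2 * N) := by
      rw [← qProd_mul_qProd (Nat.zero_le i) h, ← qBinomial_mul_qProd_zero_left hi]; ring
    rw [hsplit]
    exact dvd_mul_sub_one (X_pow_dvd_qProd_sub_one (by omega) _)
      (X_pow_dvd_qProd_sub_one (by omega) _)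
  · have hsplit : qProd R 0 N * qBinomial R (2 * N) i
        = qProd R (2 * N - i) N * qProd R i (2 * N) := by
      rw [← qProd_mul_qProd (Nat.zero_le (2 * N - i)) (by omega),
        ← qBinomial_mul_qProd_zero_sub hi]
      ring
    rw [hsplit]
    exact dvd_mul_sub_one (X_pow_dvd_qProd_sub_one (by omega) _)
      (X_pow_dvd_qProd_sub_one (by omega) _)

variable (R) in
noncomputable def jacobiCoeff (N : ℕ) (i : ℤ) : R[X] :=
  (((i - N).negOnePow : ℤ) : R[X]) * X ^ triangular (i - N) * qBinomial R (2 * N) i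

theorem jacobiCoeff_of_neg (N : ℕ) {i : ℤ} (hi : i < 0) : jacobiCoeff R N i = 0 := by
  rw [jacobiCoeff, qBinomial_of_neg _ hi, mul_zero]

theorem jacobiCoeff_of_lt {N : ℕ} {i : ℤ} (hi : 2 * (N : ℤ) < i) : jacobiCoeff R N i = 0 := by
  rw [jacobiCoeff, qBinomial_of_lt (by push_cast; omega), mul_zero]

theorem jacobiCoeff_succ (N : ℕ) (i : ℤ) :
    jacobiCoeff R (N + 1) i = (1 + X ^ (2 * N + 1)) * jacobiCoeff R N (i - 1)
      - X ^ N * jacobiCoeff R N i - X ^ (N + 1) * jacobiCoeff R N (i - 2) := by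
  set k := i - (N + 1) with hk
  have hsucc := natCast_triangular_add_one k
  have hpred := natCast_triangular_add_one (k - 1)
  rw [sub_add_cancel] at hpred
  have e1 : X ^ (triangular k + i.toNat) * qBinomial R (2 * N) i
      = X ^ (N + triangular (k + 1)) * qBinomial R (2 * N) i :=
    X_pow_mul_qBinomial_congr fun _ _ => by omega
  have e2 : X ^ (triangular k + (2 * N + 2 - i).toNat + (i - 1).toNat) * qBinomial R (2 * N) (i - 1)
      = X ^ (2 * N + 1 + triangular k) * qBinomial R (2 * N) (i - 1) :=
    X_pow_mul_qBinomial_congr fun _ _ => by omega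
  have e3 : X ^ (triangular k + (2 * N + 2 - i).toNat) * qBinomial R (2 * N) (i - 2)
      = X ^ (N + 1 + triangular (k - 1)) * qBinomial R (2 * N) (i - 2) :=
    X_pow_mul_qBinomial_congr fun _ _ => by omega
  have hpascal : qBinomial R (2 * (N + 1)) i = X ^ i.toNat * qBinomial R (2 * N) i
      + qBinomial R (2 * N) (i - 1) + X ^ (2 * N + 2 - i).toNat
        * (X ^ (i - 1).toNat * qBinomial R (2 * N) (i - 1) + qBinomial R (2 * N) (i - 2)) := by
    rw [show 2 * (N + 1) = 2 * N + 1 + 1 by ring, qBinomial_succ, qBinomial_succ', qBinomial_succ',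
      show i - 1 - 1 = i - 2 by ring,
      show ((2 * N + 1 : ℕ) : ℤ) + 1 - i = 2 * N + 2 - i by push_cast; ring]
  have hs0 : i - 1 - N = k := by omega
  have hs1 : i - N = k + 1 := by omega
  have hs2 : i - 2 - N = k - 1 := by omega
  have hneg : (k - 1).negOnePow = -k.negOnePow := by
    rw [Int.negOnePow_sub, Int.negOnePow_one, mul_neg_one]
  simp only [jacobiCoeff, hpascal, hs0, hs1, hs2, ← hk, Nat.cast_add, Nat.cast_one,
    Int.negOnePow_succ, hneg, Units.val_neg, Int.cast_neg]
  simp only [pow_add] at e1 e2 e3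
  linear_combination ((k.negOnePow : ℤ) : R[X]) * (e1 + e2 + e3)

variable (R) in
/-- The finite triple product `∏_{j<N} (1 - q^{j+1} z)(z - q^j)` in `R[q][z]`. -/
noncomputable def tripleProduct (N : ℕ) : R[X][X] :=
  ∏ j ∈ range N, (1 - C (X ^ (j + 1)) * X) * (X - C (X ^ j))

theorem coeff_tripleProduct (N m : ℕ) : (tripleProduct R N).coeff m = jacobiCoeff R N m := by
  induction N generalizing m with
  | zero =>
    rcases Nat.eq_zero_or_pos m with rfl | hm
    · simp [tripleProduct, jacobiCoeff, triangular]
    · rw [jacobiCoeff_of_lt (by simpa using hm)]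
      simp [tripleProduct, coeff_one, hm.ne']
  | succ N ih =>
    have hfactor : tripleProduct R (N + 1) = tripleProduct R N * X ^ 1
        + tripleProduct R N * X ^ 1 * C (X ^ (2 * N + 1)) - tripleProduct R N * C (X ^ N)
        - tripleProduct R N * X ^ 2 * C (X ^ (N + 1)) := by
      have hC : C (X ^ (N + 1)) * C (X ^ N) = (C (X ^ (2 * N + 1)) : R[X][X]) := by
        rw [← C_mul, ← pow_add, show N + 1 + N = 2 * N + 1 by ring]
      rw [tripleProduct, prod_range_succ, ← tripleProduct]
      linear_combination (tripleProduct R N * X) * hC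
    rw [hfactor, jacobiCoeff_succ]
    simp only [coeff_add, coeff_sub, coeff_mul_C, coeff_mul_X_pow', ih]
    rcases m with _ | _ | m
    · simp [jacobiCoeff_of_neg, mul_comm]
    · simp [jacobiCoeff_of_neg]; ring
    · simp only [show 1 ≤ m + 2 by omega, show 2 ≤ m + 2 by omega, if_true,
        show m + 2 - 1 = m + 1 by omega, show m + 2 - 2 = m by omega]
      rw [show ((m + 2 : ℕ) : ℤ) - 1 = (m + 1 : ℕ) by push_cast; ring,
        show ((m + 2 : ℕ) : ℤ) - 2 = m by push_cast; ring]
      ring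

theorem tripleProduct_eq_sum (N : ℕ) :
    tripleProduct R N = ∑ i ∈ range (2 * N + 1), C (jacobiCoeff R N i) * X ^ i := by
  have hdeg : (tripleProduct R N).natDegree < 2 * N + 1 :=
    Nat.lt_succ_of_le <| natDegree_le_iff_coeff_eq_zero.2 fun m hm => by
      rw [coeff_tripleProduct, jacobiCoeff_of_lt (by omega)]
  conv_lhs => rw [as_sum_range_C_mul_X_pow' _ hdeg]
  simp only [coeff_tripleProduct]

theorem qProd_mul_qProd_eq_sum (N : ℕ) :
    qProd R 0 (N + 1) * qProd R 0 N = ∑ i ∈ range (2 * N + 3), jacobiCoeff R (N + 1) i * i := by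
  have hsplit : tripleProduct R (N + 1) = ((∏ j ∈ range (N + 1), (1 - C (X ^ (j + 1)) * X))
      * ∏ j ∈ range N, (X - C (X ^ (j + 1)))) * (X - 1) := by
    rw [tripleProduct, prod_mul_distrib, prod_range_succ' (fun j => X - C (X ^ j))]
    simp [mul_assoc]
  have hderiv := congrArg (fun p => (derivative p).eval 1) (tripleProduct_eq_sum (R := R) (N + 1))
  rw [hsplit, derivative_mul] at hderiv
  simp [eval_prod, ← qProd_zero_left, eval_finsetSum, derivative_X_pow] at hderiv
  simpa [show 2 * (N + 1) + 1 = 2 * N + 3 by ring] using hderiv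

theorem coeff_X_pow_mul_of_X_pow_dvd_sub_one {f : R[X]} {a m n : ℕ} (hf : X ^ m ∣ f - 1)
    (hn : n < a + m) : (X ^ a * f).coeff n = if n = a then 1 else 0 := by
  obtain ⟨g, hg⟩ := hf
  rw [show f = 1 + X ^ m * g by linear_combination hg, mul_add, mul_one, ← mul_assoc, ← pow_add,
    coeff_add, coeff_X_pow, coeff_X_pow_mul', if_neg (show ¬a + m ≤ n by omega), add_zero]

theorem coeff_qProd_mul_jacobiCoeff {N i n : ℕ} (hi : i ≤ 2 * N) (hn : n < N) :
    (qProd R 0 N * jacobiCoeff R N i).coeff n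
      = if n = triangular (i - N) then ((i - N : ℤ).negOnePow : R) else 0 := by
  have hbound : n < triangular (i - N) + (min i (2 * N - i) + 1) := by
    have := abs_sub_one_le_triangular (i - N)
    have := le_abs_self ((i : ℤ) - N)
    have := neg_le_abs ((i : ℤ) - N)
    omega
  have hfactor : qProd R 0 N * jacobiCoeff R N i = (((i - N : ℤ).negOnePow : ℤ) : R[X])
      * (X ^ triangular (i - N) * (qProd R 0 N * qBinomial R (2 * N) i)) := by
    rw [jacobiCoeff]; ring
  rw [hfactor, coeff_intCast_mul,
    coeff_X_pow_mul_of_X_pow_dvd_sub_one (X_pow_dvd_qProd_mul_qBinomial_sub_one hi) hbound]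
  split_ifs <;> simp

theorem coeff_qProd_pow_three (n : ℕ) :
    (qProd R 0 n ^ 3).coeff n = ∑ i ∈ range (2 * n + 3),
      if n = triangular (i - (n + 1)) then ((i - (n + 1) : ℤ).negOnePow : R) * i else 0 := by
  have htrunc : (qProd R 0 n ^ 3).coeff n
      = (qProd R 0 (n + 1) * (qProd R 0 (n + 1) * qProd R 0 n)).coeff n := by
    rw [qProd_succ (Nat.zero_le n), show qProd R 0 n * (1 - X ^ (n + 1))
        * (qProd R 0 n * (1 - X ^ (n + 1)) * qProd R 0 n)
        = qProd R 0 n ^ 3 + qProd R 0 n ^ 3 * (X ^ (n + 1) - 2) * X ^ (n + 1) by ring,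
      coeff_add, coeff_mul_X_pow', if_neg (by omega), add_zero]
  rw [htrunc, qProd_mul_qProd_eq_sum, mul_sum, finsetSum_coeff]
  refine sum_congr rfl fun i hi => ?_
  rw [← mul_assoc, coeff_mul_natCast,
    coeff_qProd_mul_jacobiCoeff (by rw [mem_range] at hi; omega) (Nat.lt_succ_self n)]
  push_cast
  split_ifs <;> simp

theorem coeff_qProd_pow_three_of_ne (n : ℕ) (h : ∀ k : ℤ, triangular k ≠ n) :
    (qProd ℤ 0 n ^ 3).coeff n = 0 := by
  rw [coeff_qProd_pow_three]
  exact sum_eq_zero fun i _ => if_neg fun hn => h _ hn.symm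

theorem coeff_qProd_pow_three_triangular (m : ℕ) :
    (qProd ℤ 0 (triangular m) ^ 3).coeff (triangular m) = (m : ℤ).negOnePow * (2 * m + 1) := by
  set n := triangular m with hn
  have hmn : m ≤ n := by
    have := two_mul_natCast_triangular m
    nlinarith
  have hroot (i : ℕ) : n = triangular (i - (n + 1)) ↔ i = n + 1 + m ∨ i = n - m := by
    rw [hn, eq_comm, triangular_eq_triangular_iff]
    omega
  have hpair := sum_eq_add_of_mem (s := range (2 * n + 3)) (n + 1 + m) (n - m)
    (f := fun i : ℕ => if n = triangular (i - (n + 1)) then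
      ((i - (n + 1) : ℤ).negOnePow : ℤ) * i else 0)
    (by simp; omega) (by simp; omega) (by omega)
    fun i _ hi => if_neg fun h => by have := (hroot i).1 h; omega
  have hsign : (((n - m : ℕ) : ℤ) - (n + 1)).negOnePow = -(m : ℤ).negOnePow := by
    rw [show ((n - m : ℕ) : ℤ) - (n + 1) = -m - 1 by omega, Int.negOnePow_sub,
      Int.negOnePow_neg, Int.negOnePow_one, mul_neg_one]
  rw [coeff_qProd_pow_three]
  simp only [Int.cast_id]
  rw [hpair, if_pos ((hroot _).2 (Or.inl rfl)),
    if_pos ((hroot _).2 (Or.inr rfl)), hsign,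
    show ((n + 1 + m : ℕ) : ℤ) - (n + 1) = m by push_cast; ring]
  push_cast [hmn]
  ring

theorem a3_eq_coeff_qProd (n : ℕ) : a3 n = (qProd ℤ 0 n ^ 3).coeff n := by
  rw [a3, ← coeff_coe, Polynomial.coe_pow, qProd, ← Icc_add_one_left_eq_Ioc, zero_add,
    ← coeToPowerSeries.ringHom_apply, map_prod coeToPowerSeries.ringHom, ← prod_pow]
  simp [coeToPowerSeries.ringHom_apply]

/-- `a₃(n) = 0` iff `n` is not a triangular number. -/
theorem a3_eq_zero_iff (n : ℕ) :
    a3 n = 0 ↔ ¬∃ m : ℕ, m * (m + 1) / 2 = n := by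
  simp only [← triangular_natCast, a3_eq_coeff_qProd]
  constructor
  · rintro h ⟨m, rfl⟩
    rw [coeff_qProd_pow_three_triangular] at h
    simp [Units.ne_zero] at h
    omega
  · refine fun h => coeff_qProd_pow_three_of_ne n fun k hk => h ?_
    obtain ⟨m, hm⟩ := exists_natCast_triangular_eq k
    exact ⟨m, hm.trans hk⟩
end
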